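/- arXiv:1012.2130 — 3 statements merged into one kernel-verified Lean document; each statement's English description precedes it below -/
import Mathlib

section
/- Let G be a finite group, U : G → U(d) a unitary representation on H = ℂ^d, and c : G×G → ℝ a right-invariant cost function (c(ĝh,gh) = c(ĝ,g) for all ĝ,g,h ∈ G). Let K = ℂ^k, let σ be a state on H⊗K, and let Q be a POVM on H⊗K, with G acting by g ↦ U(g)⊗I_K. Then there exist a finite-dimensional space L = ℂ^l, a unit vector |Ψ⟩ ∈ H⊗L whose partial trace ρ := Tr_L[|Ψ⟩⟨Ψ|] is U-invariant (U(g)ρU(g)† = ρ for all g), and a POVM P on H⊗L (with G acting by U(g)⊗I_L) such that: the pointwise cost c(Ψ,P|g) is independent of g; c_ave(Ψ,P) = c_ave(σ,Q); and c_wc(Ψ,P) ≤ c_wc(σ,Q). -/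
/-!
Write `σ = A Aᴴ` and let `W = U ⊗ I_K`. Adjoin a register holding a copy of `H ⊗ K` and a group
element `h`, and take `Ψ = |G|^{-1/2} Σ_h (W(h⁻¹) A) ⊗ |h⟩`, i.e. the columns of the translated
purifications `W(h⁻¹) A` stacked along the register. The measurement reads `h` and then applies
`Q` shifted by `h`: `P_ĝ = ⊕_h Q(ĝ h⁻¹)`. Applying `W(g)` to `Ψ` only relabels the register by
`h ↦ h g⁻¹`, so the reduced state of `Ψ` on `H` is `U`-invariant, and by right invariance of `c`
the cost of `(Ψ, P)` at `g` is the mean over `h` of `c(σ, Q | g h⁻¹)`, which is `c_ave(σ, Q)`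
whatever `g` is. Hence the worst-case cost of `(Ψ, P)` is the average cost of `(σ, Q)`, which is
at most its worst-case cost.
-/

open Matrix Kronecker ComplexOrder

noncomputable section

/-- Partial trace over the second tensor factor. -/
def ptrace {d k : ℕ} (M : Matrix (Fin d × Fin k) (Fin d × Fin k) ℂ) :
    Matrix (Fin d) (Fin d) ℂ :=
  Matrix.of fun i i' => ∑ j : Fin k, M (i, j) (i', j)

/-- Pointwise cost `c(ρ,P|g) = Σ_ĝ c(ĝ,g)·Tr[P_ĝ W(g) ρ W(g)†]` of an estimation strategy. -/
def pCost {G : Type} [Group G] [Fintype G] {n : Type} [Fintype n]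
    (W : G → Matrix n n ℂ) (c : G → G → ℝ) (ρ : Matrix n n ℂ)
    (P : G → Matrix n n ℂ) (g : G) : ℝ :=
  ∑ ghat : G, c ghat g * (Matrix.trace (P ghat * (W g * ρ * (W g)ᴴ))).re

/-- Average cost `c_ave(ρ,P) = |G|⁻¹ Σ_g c(ρ,P|g)`. -/
def aCost {G : Type} [Group G] [Fintype G] {n : Type} [Fintype n]
    (W : G → Matrix n n ℂ) (c : G → G → ℝ) (ρ : Matrix n n ℂ)
    (P : G → Matrix n n ℂ) : ℝ :=
  (Fintype.card G : ℝ)⁻¹ * ∑ g : G, pCost W c ρ P g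

/-- Worst-case cost `c_wc(ρ,P) = max_g c(ρ,P|g)`. -/
def wCost {G : Type} [Group G] [Fintype G] {n : Type} [Fintype n]
    (W : G → Matrix n n ℂ) (c : G → G → ℝ) (ρ : Matrix n n ℂ)
    (P : G → Matrix n n ℂ) : ℝ :=
  Finset.univ.sup' ⟨(1 : G), Finset.mem_univ _⟩ (pCost W c ρ P)

namespace Matrix

variable {𝕜 n m o β : Type*} [RCLike 𝕜] [Fintype n]

theorem PosSemidef.exists_eq_mul_conjTranspose [DecidableEq n] {M : Matrix n n 𝕜}
    (hM : M.PosSemidef) : ∃ B : Matrix n n 𝕜, M = B * Bᴴ := by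
  open scoped MatrixOrder in
  obtain ⟨B, hB⟩ := CStarAlgebra.nonneg_iff_eq_star_mul_self.mp hM.nonneg
  exact ⟨Bᴴ, by simpa [star_eq_conjTranspose] using hB⟩

theorem PosSemidef.blockDiagonal [Fintype o] [DecidableEq n] [DecidableEq o]
    {M : o → Matrix n n 𝕜} (hM : ∀ i, (M i).PosSemidef) : (blockDiagonal M).PosSemidef := by
  choose B hB using fun i => (hM i).exists_eq_mul_conjTranspose
  rw [funext hB, blockDiagonal_mul, ← blockDiagonal_conjTranspose]
  exact posSemidef_self_mul_conjTranspose _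

theorem trace_submatrix_equiv {R : Type*} [AddCommMonoid R] [Fintype o] (M : Matrix n n R)
    (e : o ≃ n) : (M.submatrix e e).trace = M.trace :=
  Fintype.sum_equiv e _ _ fun _ => rfl

omit [Fintype n] in
theorem sum_submatrix {R ι : Type*} [AddCommMonoid R] (M : ι → Matrix n n R) (s : Finset ι)
    (e₁ e₂ : o → n) : ∑ i ∈ s, (M i).submatrix e₁ e₂ = (∑ i ∈ s, M i).submatrix e₁ e₂ := by
  ext
  simp [Matrix.sum_apply]

theorem trace_unitary_conj [DecidableEq n] (U : unitaryGroup n 𝕜) (M : Matrix n n 𝕜) :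
    ((U : Matrix n n 𝕜) * M * (U : Matrix n n 𝕜)ᴴ).trace = M.trace := by
  rw [trace_mul_cycle, ← star_eq_conjTranspose, UnitaryGroup.star_mul_self, Matrix.one_mul]

theorem mul_vecMulVec_star_mul_conjTranspose (X : Matrix m n 𝕜) (ψ : n → 𝕜) :
    X * vecMulVec ψ (star ψ) * Xᴴ = vecMulVec (X *ᵥ ψ) (star (X *ᵥ ψ)) := by
  rw [mul_vecMulVec, vecMulVec_mul, star_mulVec]

theorem re_trace_vecMulVec_star (ψ : n → 𝕜) :
    RCLike.re (vecMulVec ψ (star ψ)).trace = ∑ x, ‖ψ x‖ ^ 2 := by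
  simp [dotProduct, RCLike.mul_conj]

/-- A purification of `∑ b, B b * (B b)ᴴ`, with ancilla `m × β`. -/
def stackCols (B : β → Matrix n m 𝕜) : n × (m × β) → 𝕜 := fun x => B x.2.2 x.1 x.2.1

theorem stackCols_dotProduct_star [Fintype m] [Fintype β] (B C : β → Matrix n m 𝕜) :
    stackCols C ⬝ᵥ star (stackCols B) = ∑ b, (C b * (B b)ᴴ).trace := by
  simp only [stackCols, dotProduct, trace, diag, mul_apply, Fintype.sum_prod_type, Pi.star_apply,
    conjTranspose_apply]
  conv_lhs => enter [2, i]; rw [Finset.sum_comm]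
  exact Finset.sum_comm

variable [Fintype m] [Fintype β] [DecidableEq m] [DecidableEq β]

theorem kronecker_one_mulVec_stackCols (X : Matrix n n 𝕜) (B : β → Matrix n m 𝕜) :
    (X ⊗ₖ (1 : Matrix (m × β) (m × β) 𝕜)) *ᵥ stackCols B = stackCols fun b => X * B b := by
  ext ⟨i, j, b⟩
  simp [stackCols, mulVec, dotProduct, mul_apply, Fintype.sum_prod_type, one_apply]

theorem blockDiagonal_mulVec_stackCols [DecidableEq n] (P : β → Matrix n n 𝕜)
    (B : β → Matrix n m 𝕜) :
    blockDiagonal (fun x : m × β => P x.2) *ᵥ stackCols B = stackCols fun b => P b * B b := by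
  ext ⟨i, j, b⟩
  simp [stackCols, mulVec, dotProduct, mul_apply, Fintype.sum_prod_type, blockDiagonal_apply]

theorem trace_blockDiagonal_mul_vecMulVec_stackCols [DecidableEq n] (P : β → Matrix n n 𝕜)
    (B : β → Matrix n m 𝕜) :
    (blockDiagonal (fun x : m × β => P x.2) * vecMulVec (stackCols B) (star (stackCols B))).trace
      = ∑ b, (P b * (B b * (B b)ᴴ)).trace := by
  simp [mul_vecMulVec, blockDiagonal_mulVec_stackCols, stackCols_dotProduct_star,
    Matrix.mul_assoc]

end Matrix

namespace Matrix.UnitaryGroup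

variable {G : Type*} [Group G] {n : Type*} [Fintype n] [DecidableEq n]
  (U : G →* unitaryGroup n ℂ) (κ : Type*) [Fintype κ] [DecidableEq κ]

def ampliation : G →* unitaryGroup (n × κ) ℂ where
  toFun g := ⟨(U g : Matrix n n ℂ) ⊗ₖ (1 : Matrix κ κ ℂ),
    kronecker_mem_unitary (U g).2 (one_mem _)⟩
  map_one' := Subtype.ext <| show (U 1 : Matrix n n ℂ) ⊗ₖ (1 : Matrix κ κ ℂ) = 1 by
    rw [map_one, UnitaryGroup.one_val, one_kronecker_one]
  map_mul' g h := by ext : 1; simp [← mul_kronecker_mul]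

end Matrix.UnitaryGroup

section PartialTrace

variable {d l : ℕ}

theorem ptrace_kronecker_one_conj (V : Matrix (Fin d) (Fin d) ℂ)
    (M : Matrix (Fin d × Fin l) (Fin d × Fin l) ℂ) :
    ptrace ((V ⊗ₖ (1 : Matrix (Fin l) (Fin l) ℂ)) * M * (V ⊗ₖ (1 : Matrix (Fin l) (Fin l) ℂ))ᴴ)
      = V * ptrace M * Vᴴ := by
  ext i i'
  simp [ptrace, mul_apply, Fintype.sum_prod_type, one_apply, Finset.sum_mul, Finset.mul_sum,
    apply_ite (starRingEnd ℂ)]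
  rw [Finset.sum_comm]
  exact Finset.sum_congr rfl fun _ _ => Finset.sum_comm

theorem ptrace_vecMulVec_comp_perm (Ψ : Fin d × Fin l → ℂ) (π : Equiv.Perm (Fin l)) :
    ptrace (vecMulVec (fun x => Ψ (x.1, π x.2)) (star fun x => Ψ (x.1, π x.2)))
      = ptrace (vecMulVec Ψ (star Ψ)) := by
  ext i i'
  exact Equiv.sum_comp π fun a => Ψ (i, a) * star (Ψ (i', a))

theorem conj_ptrace_vecMulVec_of_mulVec_eq_comp_perm (V : Matrix (Fin d) (Fin d) ℂ)
    (Ψ : Fin d × Fin l → ℂ) (π : Equiv.Perm (Fin l))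
    (h : (V ⊗ₖ (1 : Matrix (Fin l) (Fin l) ℂ)) *ᵥ Ψ = fun x => Ψ (x.1, π x.2)) :
    V * ptrace (vecMulVec Ψ (star Ψ)) * Vᴴ = ptrace (vecMulVec Ψ (star Ψ)) := by
  rw [← ptrace_kronecker_one_conj, mul_vecMulVec_star_mul_conjTranspose, h,
    ptrace_vecMulVec_comp_perm]

end PartialTrace

section Costs

variable {G : Type} [Group G] [Fintype G] {n : Type} [Fintype n]

theorem pCost_submatrix {n' : Type} [Fintype n'] (e : n' ≃ n) (W : G → Matrix n n ℂ)
    (c : G → G → ℝ) (ρ : Matrix n n ℂ) (P : G → Matrix n n ℂ) (g : G) :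
    pCost (fun g => (W g).submatrix e e) c (ρ.submatrix e e)
        (fun ghat => (P ghat).submatrix e e) g
      = pCost W c ρ P g := by
  simp only [pCost, conjTranspose_submatrix, submatrix_mul_equiv, trace_submatrix_equiv]

theorem pCost_real_smul (W : G → Matrix n n ℂ) (c : G → G → ℝ) (r : ℝ) (ρ : Matrix n n ℂ)
    (P : G → Matrix n n ℂ) (g : G) :
    pCost W c ((r : ℂ) • ρ) P g = r * pCost W c ρ P g := by
  simp only [pCost, Matrix.mul_smul, Matrix.smul_mul, trace_smul, smul_eq_mul,
    Complex.re_ofReal_mul, Finset.mul_sum]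
  exact Finset.sum_congr rfl fun _ _ => by ring

theorem pCost_conj_of_rightInvariant {W : G → Matrix n n ℂ}
    (hW : ∀ g h, W (g * h) = W g * W h) {c : G → G → ℝ}
    (hc : ∀ ghat g h : G, c (ghat * h) (g * h) = c ghat g) (ρ : Matrix n n ℂ)
    (P : G → Matrix n n ℂ) (g h : G) :
    pCost W c (W h * ρ * (W h)ᴴ) (fun ghat => P (ghat * h)) g = pCost W c ρ P (g * h) := by
  simp only [pCost, hW, conjTranspose_mul, Matrix.mul_assoc]
  exact Fintype.sum_equiv (Equiv.mulRight h) _ _ fun ghat => by rw [Equiv.coe_mulRight, hc]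

theorem pCost_kronecker_one_stackCols [DecidableEq n] {m β : Type} [Fintype m] [Fintype β]
    [DecidableEq m] [DecidableEq β] (W : G → Matrix n n ℂ) (c : G → G → ℝ)
    (P : G → β → Matrix n n ℂ) (B : β → Matrix n m ℂ) (g : G) :
    pCost (fun g => W g ⊗ₖ (1 : Matrix (m × β) (m × β) ℂ)) c
        (vecMulVec (stackCols B) (star (stackCols B)))
        (fun ghat => blockDiagonal fun x : m × β => P ghat x.2) g
      = ∑ b, pCost W c (B b * (B b)ᴴ) (fun ghat => P ghat b) g := by
  simp only [pCost, mul_vecMulVec_star_mul_conjTranspose, kronecker_one_mulVec_stackCols,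
    trace_blockDiagonal_mul_vecMulVec_stackCols, Complex.re_sum, Finset.mul_sum]
  rw [Finset.sum_comm]
  simp only [conjTranspose_mul, Matrix.mul_assoc]

variable {W : G → Matrix n n ℂ} {c : G → G → ℝ} {ρ : Matrix n n ℂ} {P : G → Matrix n n ℂ}

theorem aCost_eq_of_forall_pCost_eq {r : ℝ} (h : ∀ g, pCost W c ρ P g = r) :
    aCost W c ρ P = r := by
  simp [aCost, h]

theorem wCost_eq_of_forall_pCost_eq {r : ℝ} (h : ∀ g, pCost W c ρ P g = r) :
    wCost W c ρ P = r := by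
  rw [wCost, show pCost W c ρ P = fun _ => r from funext h]
  exact Finset.sup'_const _ r

theorem aCost_le_wCost : aCost W c ρ P ≤ wCost W c ρ P := by
  rw [aCost, inv_mul_le_iff₀ (by simp [Fintype.card_pos])]
  calc ∑ g, pCost W c ρ P g ≤ ∑ _g : G, wCost W c ρ P :=
        Finset.sum_le_sum fun g _ => Finset.le_sup' _ (Finset.mem_univ g)
    _ = Fintype.card G * wCost W c ρ P := by simp

end Costs

section Covariant

variable {G : Type} [Group G] [Fintype G] {n : Type} [Fintype n] [DecidableEq n]
  (W : G →* unitaryGroup n ℂ) (A : Matrix n n ℂ)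

def orbitBlock (h : G) : Matrix n n ℂ :=
  (((Real.sqrt (Fintype.card G))⁻¹ : ℝ) : ℂ) • ((W h⁻¹ : Matrix n n ℂ) * A)

def covState : n × (n × G) → ℂ := stackCols (orbitBlock W A)

theorem mul_orbitBlock (g h : G) :
    (W g : Matrix n n ℂ) * orbitBlock W A h = orbitBlock W A (h * g⁻¹) := by
  simp [orbitBlock, ← Matrix.mul_assoc]

theorem orbitBlock_mul_conjTranspose (h : G) :
    orbitBlock W A h * (orbitBlock W A h)ᴴ
      = (((Fintype.card G : ℝ)⁻¹ : ℝ) : ℂ)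
          • ((W h⁻¹ : Matrix n n ℂ) * (A * Aᴴ) * (W h⁻¹ : Matrix n n ℂ)ᴴ) := by
  simp only [orbitBlock, conjTranspose_smul, conjTranspose_mul, Complex.star_def,
    Complex.conj_ofReal, smul_mul_smul_comm, Matrix.mul_assoc]
  rw [← Complex.ofReal_mul, ← mul_inv, Real.mul_self_sqrt (Nat.cast_nonneg _)]

theorem sum_norm_sq_covState : ∑ x, ‖covState W A x‖ ^ 2 = (A * Aᴴ).trace.re := by
  rw [← re_trace_vecMulVec_star, trace_vecMulVec, covState, stackCols_dotProduct_star]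
  simp only [orbitBlock_mul_conjTranspose, trace_smul, trace_unitary_conj]
  simp [Fintype.card_ne_zero]

variable [DecidableEq G]

def covPOVM (Q : G → Matrix n n ℂ) (ghat : G) : Matrix (n × (n × G)) (n × (n × G)) ℂ :=
  blockDiagonal fun x : n × G => Q (ghat * x.2⁻¹)

theorem kronecker_one_mulVec_covState (g : G) :
    ((W g : Matrix n n ℂ) ⊗ₖ (1 : Matrix (n × G) (n × G) ℂ)) *ᵥ covState W A
      = fun x => covState W A (x.1, x.2.1, x.2.2 * g⁻¹) := by
  simp only [covState, kronecker_one_mulVec_stackCols, mul_orbitBlock]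
  rfl

theorem covPOVM_posSemidef {Q : G → Matrix n n ℂ} (hQ : ∀ ghat, (Q ghat).PosSemidef)
    (ghat : G) : (covPOVM Q ghat).PosSemidef :=
  PosSemidef.blockDiagonal fun _ => hQ _

omit [Fintype n] in
theorem sum_covPOVM {Q : G → Matrix n n ℂ} (hQ : ∑ ghat, Q ghat = 1) :
    ∑ ghat, covPOVM Q ghat = 1 := by
  have hQ' (h : G) : ∑ ghat, Q (ghat * h) = 1 :=
    (Fintype.sum_equiv (Equiv.mulRight h) _ _ fun _ => rfl).trans hQ
  rw [← blockDiagonal_one]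
  exact (map_sum (blockDiagonalAddMonoidHom n n (n × G) ℂ) _ _).symm.trans
    (congrArg blockDiagonal (funext fun x => (Finset.sum_apply _ _ _).trans (hQ' x.2⁻¹)))

theorem pCost_covState {c : G → G → ℝ}
    (hc : ∀ ghat g h : G, c (ghat * h) (g * h) = c ghat g) (Q : G → Matrix n n ℂ) (g : G) :
    pCost (fun g => (W g : Matrix n n ℂ) ⊗ₖ (1 : Matrix (n × G) (n × G) ℂ)) c
        (vecMulVec (covState W A) (star (covState W A))) (covPOVM Q) g
      = aCost (fun g => (W g : Matrix n n ℂ)) c (A * Aᴴ) Q := by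
  refine (pCost_kronecker_one_stackCols (fun g => (W g : Matrix n n ℂ)) c
    (fun ghat h => Q (ghat * h⁻¹)) (orbitBlock W A) g).trans ?_
  simp only [orbitBlock_mul_conjTranspose, pCost_real_smul,
    pCost_conj_of_rightInvariant (W := fun g => (W g : Matrix n n ℂ)) (fun g h => by simp) hc,
    aCost, Finset.mul_sum]
  exact Fintype.sum_equiv ((Equiv.inv G).trans (Equiv.mulLeft g)) _ _ fun _ => rfl

end Covariant

section Transport

def ancillaEquiv {m ι κ β : Type*} (e : ι ≃ κ × β) : m × ι ≃ (m × κ) × β :=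
  (Equiv.prodCongr (Equiv.refl m) e).trans (Equiv.prodAssoc m κ β).symm

theorem kronecker_one_kronecker_one_submatrix_ancillaEquiv {m ι κ β : Type*} [DecidableEq ι]
    [DecidableEq κ] [DecidableEq β] (V : Matrix m m ℂ) (e : ι ≃ κ × β) :
    ((V ⊗ₖ (1 : Matrix κ κ ℂ)) ⊗ₖ (1 : Matrix β β ℂ)).submatrix (ancillaEquiv e) (ancillaEquiv e)
      = V ⊗ₖ (1 : Matrix ι ι ℂ) := by
  ext ⟨i, a⟩ ⟨j, b⟩
  by_cases hab : a = b
  · simp [ancillaEquiv, hab]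
  · simp [ancillaEquiv, one_apply, hab]
    intro h2 h1
    exact absurd (e.injective (Prod.ext h1 h2)) hab

variable {G : Type} [Group G] [Fintype G] [DecidableEq G] {d k l : ℕ}
  (U : G →* unitaryGroup (Fin d) ℂ) (A : Matrix (Fin d × Fin k) (Fin d × Fin k) ℂ)
  (e : Fin l ≃ Fin k × ((Fin d × Fin k) × G))

local notation "W" => UnitaryGroup.ampliation U (Fin k)
local notation "Ψ" => covState W A ∘ ancillaEquiv e

omit [Fintype G] in
theorem ampliation_kronecker_one_submatrix_ancillaEquiv (g : G) :
    ((W g : Matrix (Fin d × Fin k) (Fin d × Fin k) ℂ)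
        ⊗ₖ (1 : Matrix ((Fin d × Fin k) × G) ((Fin d × Fin k) × G) ℂ)).submatrix
      (ancillaEquiv e) (ancillaEquiv e)
      = (U g : Matrix (Fin d) (Fin d) ℂ) ⊗ₖ (1 : Matrix (Fin l) (Fin l) ℂ) :=
  kronecker_one_kronecker_one_submatrix_ancillaEquiv _ e

theorem conj_ptrace_covState_comp (g : G) :
    (U g : Matrix (Fin d) (Fin d) ℂ) * ptrace (vecMulVec Ψ (star Ψ)) * (U g : Matrix _ _ ℂ)ᴴ
      = ptrace (vecMulVec Ψ (star Ψ)) := by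
  let shift : Fin k × ((Fin d × Fin k) × G) ≃ Fin k × ((Fin d × Fin k) × G) :=
    (Equiv.refl _).prodCongr ((Equiv.refl _).prodCongr (Equiv.mulRight g⁻¹))
  refine conj_ptrace_vecMulVec_of_mulVec_eq_comp_perm _ _ (e.trans (shift.trans e.symm)) ?_
  rw [← ampliation_kronecker_one_submatrix_ancillaEquiv, submatrix_mulVec_equiv,
    Function.comp_assoc, Equiv.self_comp_symm, Function.comp_id, kronecker_one_mulVec_covState]
  funext x
  simp [ancillaEquiv, shift]
  rfl

theorem pCost_covState_comp {c : G → G → ℝ}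
    (hc : ∀ ghat g h : G, c (ghat * h) (g * h) = c ghat g)
    (Q : G → Matrix (Fin d × Fin k) (Fin d × Fin k) ℂ) (g : G) :
    pCost (fun g => (U g : Matrix (Fin d) (Fin d) ℂ) ⊗ₖ (1 : Matrix (Fin l) (Fin l) ℂ)) c
        (vecMulVec Ψ (star Ψ))
        (fun ghat => (covPOVM Q ghat).submatrix (ancillaEquiv e) (ancillaEquiv e)) g
      = aCost (fun g => (U g : Matrix (Fin d) (Fin d) ℂ) ⊗ₖ (1 : Matrix (Fin k) (Fin k) ℂ)) c
        (A * Aᴴ) Q := by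
  have hρ : vecMulVec Ψ (star Ψ) = (vecMulVec (covState W A) (star (covState W A))).submatrix
      (ancillaEquiv e) (ancillaEquiv e) := rfl
  rw [funext fun g => (ampliation_kronecker_one_submatrix_ancillaEquiv U e g).symm, hρ,
    pCost_submatrix]
  exact pCost_covState W A hc Q g

end Transport

/-- For a right-invariant cost function, any strategy `(σ,Q)` on `H⊗K` can be replaced by a
strategy whose input is a pure state `|Ψ⟩ ∈ H⊗L` purifying a `U`-invariant state, whose
pointwise cost is constant in `g`, whose average cost equals that of `(σ,Q)`, and whose
worst-case cost is no larger than that of `(σ,Q)`. -/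
theorem stmt10 {G : Type} [Group G] [Fintype G] [DecidableEq G] {d k : ℕ}
    (U : G →* Matrix.unitaryGroup (Fin d) ℂ)
    (c : G → G → ℝ) (hc : ∀ ghat g h : G, c (ghat * h) (g * h) = c ghat g)
    (σ : Matrix (Fin d × Fin k) (Fin d × Fin k) ℂ)
    (hσ : σ.PosSemidef) (hσtr : σ.trace = 1)
    (Q : G → Matrix (Fin d × Fin k) (Fin d × Fin k) ℂ)
    (hQpos : ∀ ghat, (Q ghat).PosSemidef) (hQsum : ∑ ghat, Q ghat = 1) :
    ∃ (l : ℕ) (Ψ : Fin d × Fin l → ℂ)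
      (P : G → Matrix (Fin d × Fin l) (Fin d × Fin l) ℂ),
      (∑ x, ‖Ψ x‖ ^ 2 = 1) ∧
      (∀ g : G, (U g : Matrix (Fin d) (Fin d) ℂ)
          * ptrace (Matrix.vecMulVec Ψ (star Ψ))
          * (U g : Matrix (Fin d) (Fin d) ℂ)ᴴ
        = ptrace (Matrix.vecMulVec Ψ (star Ψ))) ∧
      (∀ ghat, (P ghat).PosSemidef) ∧ (∑ ghat, P ghat = 1) ∧
      (∀ g g' : G,
        pCost (fun g => (U g : Matrix (Fin d) (Fin d) ℂ) ⊗ₖ (1 : Matrix (Fin l) (Fin l) ℂ))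
            c (Matrix.vecMulVec Ψ (star Ψ)) P g
          = pCost (fun g => (U g : Matrix (Fin d) (Fin d) ℂ) ⊗ₖ (1 : Matrix (Fin l) (Fin l) ℂ))
            c (Matrix.vecMulVec Ψ (star Ψ)) P g') ∧
      (aCost (fun g => (U g : Matrix (Fin d) (Fin d) ℂ) ⊗ₖ (1 : Matrix (Fin l) (Fin l) ℂ))
            c (Matrix.vecMulVec Ψ (star Ψ)) P
        = aCost (fun g => (U g : Matrix (Fin d) (Fin d) ℂ) ⊗ₖ (1 : Matrix (Fin k) (Fin k) ℂ))
            c σ Q) ∧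
      (wCost (fun g => (U g : Matrix (Fin d) (Fin d) ℂ) ⊗ₖ (1 : Matrix (Fin l) (Fin l) ℂ))
            c (Matrix.vecMulVec Ψ (star Ψ)) P
        ≤ wCost (fun g => (U g : Matrix (Fin d) (Fin d) ℂ) ⊗ₖ (1 : Matrix (Fin k) (Fin k) ℂ))
            c σ Q) := by
  obtain ⟨A, rfl⟩ := hσ.exists_eq_mul_conjTranspose
  -- the ancilla `L = K ⊗ (H ⊗ K) ⊗ ℂ^G`, numbered by `Fin l`
  let e := (Fintype.equivFin (Fin k × ((Fin d × Fin k) × G))).symm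
  have hcost := pCost_covState_comp U A e hc Q
  refine ⟨_, _, fun ghat => (covPOVM Q ghat).submatrix (ancillaEquiv e) (ancillaEquiv e), ?_,
    conj_ptrace_covState_comp U A e, fun ghat => (covPOVM_posSemidef hQpos ghat).submatrix _, ?_,
    fun g g' => (hcost g).trans (hcost g').symm, aCost_eq_of_forall_pCost_eq hcost,
    (wCost_eq_of_forall_pCost_eq hcost).trans_le aCost_le_wCost⟩
  · rw [Function.comp_def, Equiv.sum_comp (ancillaEquiv e) fun x => ‖covState _ A x‖ ^ 2,
      sum_norm_sq_covState, hσtr, Complex.one_re]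
  · rw [sum_submatrix, sum_covPOVM hQsum, submatrix_one_equiv]
end
end

section
/- Let c : G×G → ℝ be an invariant cost function (c(hĝk,hgk) = c(ĝ,g) for all h,k ∈ G), let ρ be an isotropic state on H̃ (Ũ(g)Ũ^R(g) ρ Ũ^R(g)† Ũ(g)† = ρ for all g), and let P_ĝ := (1/|G|) Ũ(ĝ) ξ Ũ(ĝ)† be a covariant POVM with positive semidefinite seed ξ. Define ξ' := (1/|G|) Σ_{h∈G} Ũ(h)Ũ^R(h) ξ Ũ^R(h)† Ũ(h)† and P'_ĝ := (1/|G|) Ũ(ĝ) ξ' Ũ(ĝ)†. Then ξ' is positive semidefinite and isotropic, P' is a POVM, and c_ave(ρ,P') = c_ave(ρ,P). -/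
open Matrix Kronecker ComplexOrder

noncomputable section

/-- A matrix representation is irreducible iff its commutant consists of scalars
(Schur's criterion, which over `ℂ` is equivalent to irreducibility). -/
def IsIrrep {G : Type} [Group G] {n : ℕ} (U : G →* Matrix.unitaryGroup (Fin n) ℂ) : Prop :=
  ∀ T : Matrix (Fin n) (Fin n) ℂ,
    (∀ g : G, T * (U g : Matrix (Fin n) (Fin n) ℂ) = (U g : Matrix (Fin n) (Fin n) ℂ) * T) →
    ∃ c : ℂ, T = c • (1 : Matrix (Fin n) (Fin n) ℂ)

/-- Equivalence of two matrix representations: an invertible intertwiner exists. -/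
def RepEquiv {G : Type} [Group G] {n m : ℕ} (U : G →* Matrix.unitaryGroup (Fin n) ℂ)
    (V : G →* Matrix.unitaryGroup (Fin m) ℂ) : Prop :=
  ∃ T : Matrix (Fin m) (Fin n) ℂ, Function.Bijective T.mulVec ∧
    ∀ g : G, T * (U g : Matrix (Fin n) (Fin n) ℂ) = (V g : Matrix (Fin m) (Fin m) ℂ) * T

/-- The block-diagonal representation `Ũ(g) = ⊕_μ U^μ(g) ⊗ I_{d_μ}`
on `H̃ = ⊕_μ ℂ^{d_μ} ⊗ ℂ^{d_μ}`. -/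
def Utilde {G : Type} [Group G] {ι : Type} [Fintype ι] [DecidableEq ι] (d : ι → ℕ)
    (U : ∀ μ, G →* Matrix.unitaryGroup (Fin (d μ)) ℂ) (g : G) :
    Matrix (Σ μ, Fin (d μ) × Fin (d μ)) (Σ μ, Fin (d μ) × Fin (d μ)) ℂ :=
  Matrix.blockDiagonal'
    (fun μ => (U μ g : Matrix (Fin (d μ)) (Fin (d μ)) ℂ) ⊗ₖ (1 : Matrix (Fin (d μ)) (Fin (d μ)) ℂ))

/-- The modular conjugate representation `Ũ^R(g) = ⊕_μ I_{d_μ} ⊗ conj (U^μ(g))`. -/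
def UtildeR {G : Type} [Group G] {ι : Type} [Fintype ι] [DecidableEq ι] (d : ι → ℕ)
    (U : ∀ μ, G →* Matrix.unitaryGroup (Fin (d μ)) ℂ) (g : G) :
    Matrix (Σ μ, Fin (d μ) × Fin (d μ)) (Σ μ, Fin (d μ) × Fin (d μ)) ℂ :=
  Matrix.blockDiagonal'
    (fun μ => (1 : Matrix (Fin (d μ)) (Fin (d μ)) ℂ) ⊗ₖ
      ((U μ g : Matrix (Fin (d μ)) (Fin (d μ)) ℂ).map (starRingEnd ℂ)))

/-! The symmetrized seed `ξ'` is the twirl of `ξ` over the unitary representation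
`V(h) = Ũ(h) Ũ^R(h)`, so it is positive semidefinite and `V`-invariant. Because `Ũ^R` commutes
with `Ũ`, twirling over `Ũ` commutes with conjugation by `Ũ^R(h)` and absorbs conjugation by
`Ũ(h)`; hence the `Ũ`-twirl of `ξ'` is the `Ũ^R`-twirl of the `Ũ`-twirl of `ξ`, i.e. of `1`.
For the cost, left invariance of `c` turns the average cost of the covariant POVM with seed `X`
into `Re Tr[X Θ] / |G|` with `Θ = Σ_k c(1,k) Ũ(k) ρ Ũ(k)†`. Conjugation invariance of `c` and
isotropy of `ρ` make `Θ` invariant under `V`, so `Tr[ξ' Θ] = Tr[ξ Θ]`. -/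

open Finset

section Utilde

variable {G : Type} [Group G] {ι : Type} [Fintype ι] [DecidableEq ι] (d : ι → ℕ)
  (U : ∀ μ, G →* Matrix.unitaryGroup (Fin (d μ)) ℂ)

lemma Utilde_mul (g h : G) : Utilde d U g * Utilde d U h = Utilde d U (g * h) := by
  simp only [Utilde, ← blockDiagonal'_mul, ← mul_kronecker_mul, one_mul, map_mul,
    UnitaryGroup.mul_val]

lemma UtildeR_mul (g h : G) : UtildeR d U g * UtildeR d U h = UtildeR d U (g * h) := by
  simp only [UtildeR, ← blockDiagonal'_mul, ← mul_kronecker_mul, one_mul, ← Matrix.map_mul,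
    map_mul, UnitaryGroup.mul_val]

lemma Utilde_one : Utilde d U 1 = 1 := by
  simp [Utilde, ← Pi.one_def]

lemma UtildeR_one : UtildeR d U 1 = 1 := by
  simp [UtildeR, ← Pi.one_def]

lemma conjTranspose_Utilde (g : G) : (Utilde d U g)ᴴ = Utilde d U g⁻¹ := by
  simp [Utilde, blockDiagonal'_conjTranspose, conjTranspose_kronecker, star_eq_conjTranspose]

lemma conjTranspose_UtildeR (g : G) : (UtildeR d U g)ᴴ = UtildeR d U g⁻¹ := by
  simp only [UtildeR, blockDiagonal'_conjTranspose, conjTranspose_kronecker, conjTranspose_one,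
    map_inv, UnitaryGroup.inv_val, star_eq_conjTranspose]
  rfl

lemma Utilde_commute_UtildeR (g h : G) : Commute (Utilde d U g) (UtildeR d U h) := by
  simp only [Commute, SemiconjBy, Utilde, UtildeR, ← blockDiagonal'_mul, ← mul_kronecker_mul,
    one_mul, mul_one]

def utildeRep : G →* unitaryGroup (Σ μ, Fin (d μ) × Fin (d μ)) ℂ where
  toFun g := ⟨Utilde d U g, mem_unitaryGroup_iff'.2 <| by
    rw [star_eq_conjTranspose, conjTranspose_Utilde, Utilde_mul, inv_mul_cancel, Utilde_one]⟩
  map_one' := Subtype.ext (Utilde_one d U)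
  map_mul' g h := Subtype.ext (Utilde_mul d U g h).symm

def utildeRRep : G →* unitaryGroup (Σ μ, Fin (d μ) × Fin (d μ)) ℂ where
  toFun g := ⟨UtildeR d U g, mem_unitaryGroup_iff'.2 <| by
    rw [star_eq_conjTranspose, conjTranspose_UtildeR, UtildeR_mul, inv_mul_cancel, UtildeR_one]⟩
  map_one' := Subtype.ext (UtildeR_one d U)
  map_mul' g h := Subtype.ext (UtildeR_mul d U g h).symm

end Utilde

section UnitaryRep

variable {G : Type} [Group G] {n : Type} [Fintype n] [DecidableEq n]

lemma conjTranspose_unitaryRep (W : G →* unitaryGroup n ℂ) (g : G) :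
    (W g : Matrix n n ℂ)ᴴ = W g⁻¹ := by
  rw [map_inv, UnitaryGroup.inv_val, star_eq_conjTranspose]

lemma unitaryRep_mul_conjTranspose (W : G →* unitaryGroup n ℂ) (g : G) :
    (W g : Matrix n n ℂ) * (W g : Matrix n n ℂ)ᴴ = 1 :=
  Unitary.coe_mul_star_self (W g)

lemma conjTranspose_mul_unitaryRep (W : G →* unitaryGroup n ℂ) (g : G) :
    (W g : Matrix n n ℂ)ᴴ * (W g : Matrix n n ℂ) = 1 :=
  Unitary.coe_star_mul_self (W g)

lemma unitary_conj_mul_mul {U : Matrix n n ℂ} (hU : Uᴴ * U = 1) (A B C : Matrix n n ℂ) :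
    U * (A * B * C) * Uᴴ = (U * A * Uᴴ) * (U * B * Uᴴ) * (U * C * Uᴴ) := by
  calc U * (A * B * C) * Uᴴ = U * A * (Uᴴ * U) * B * (Uᴴ * U) * C * Uᴴ := by
        simp only [hU, mul_one, mul_assoc]
    _ = _ := by simp only [mul_assoc]

def mulRep (A R : G →* unitaryGroup n ℂ) (hAR : ∀ g h, Commute (A g : Matrix n n ℂ) (R h)) :
    G →* unitaryGroup n ℂ where
  toFun g := A g * R g
  map_one' := by simp
  map_mul' g h := Subtype.ext <| by
    simp only [map_mul, UnitaryGroup.mul_val, mul_assoc, (hAR h g).left_comm]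

lemma coe_mulRep (A R : G →* unitaryGroup n ℂ) (hAR : ∀ g h, Commute (A g : Matrix n n ℂ) (R h))
    (g : G) : (mulRep A R hAR g : Matrix n n ℂ) = A g * R g :=
  rfl

lemma mulRep_conj_left (A R : G →* unitaryGroup n ℂ)
    (hAR : ∀ g h, Commute (A g : Matrix n n ℂ) (R h)) (g k : G) :
    (mulRep A R hAR g : Matrix n n ℂ) * A k * (mulRep A R hAR g : Matrix n n ℂ)ᴴ =
      A (g * k * g⁻¹) := by
  calc (mulRep A R hAR g : Matrix n n ℂ) * A k * (mulRep A R hAR g : Matrix n n ℂ)ᴴ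
      = A g * A k * (R g * (R g : Matrix n n ℂ)ᴴ) * (A g : Matrix n n ℂ)ᴴ := by
        simp only [coe_mulRep, conjTranspose_mul, mul_assoc]
        rw [(hAR k g).symm.left_comm]
    _ = A (g * k * g⁻¹) := by
        rw [unitaryRep_mul_conjTranspose, mul_one, conjTranspose_unitaryRep]
        simp only [map_mul, UnitaryGroup.mul_val]

variable [Fintype G]

def twirl (W : G →* unitaryGroup n ℂ) : Matrix n n ℂ →ₗ[ℂ] Matrix n n ℂ where
  toFun X := (Fintype.card G : ℂ)⁻¹ • ∑ g, (W g : Matrix n n ℂ) * X * (W g : Matrix n n ℂ)ᴴ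
  map_add' X Y := by simp only [Matrix.mul_add, Matrix.add_mul, sum_add_distrib, smul_add]
  map_smul' a X := by
    simp only [Matrix.mul_smul, Matrix.smul_mul, ← smul_sum, smul_comm a, RingHom.id_apply]

lemma twirl_apply (W : G →* unitaryGroup n ℂ) (X : Matrix n n ℂ) :
    twirl W X = (Fintype.card G : ℂ)⁻¹ • ∑ g, (W g : Matrix n n ℂ) * X * (W g : Matrix n n ℂ)ᴴ :=
  rfl

lemma Matrix.PosSemidef.twirl {X : Matrix n n ℂ} (hX : X.PosSemidef) (W : G →* unitaryGroup n ℂ) :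
    (twirl W X).PosSemidef :=
  (posSemidef_sum _ fun _ _ => hX.mul_mul_conjTranspose_same _).smul (by positivity)

lemma twirl_one (W : G →* unitaryGroup n ℂ) : twirl W 1 = 1 := by
  simp only [twirl_apply, Matrix.mul_one, unitaryRep_mul_conjTranspose, sum_const, card_univ,
    ← Nat.cast_smul_eq_nsmul ℂ, smul_smul]
  rw [inv_mul_cancel₀ (by exact_mod_cast Fintype.card_ne_zero), one_smul]

lemma unitaryRep_conj_twirl (W : G →* unitaryGroup n ℂ) (g : G) (X : Matrix n n ℂ) :
    (W g : Matrix n n ℂ) * twirl W X * (W g : Matrix n n ℂ)ᴴ = twirl W X := by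
  simp only [twirl_apply, Matrix.mul_smul, Matrix.smul_mul, mul_sum, sum_mul]
  congr 1
  refine Fintype.sum_equiv (Equiv.mulLeft g) _ _ fun h => ?_
  simp only [Equiv.coe_mulLeft, map_mul, UnitaryGroup.mul_val, conjTranspose_mul, mul_assoc]

lemma twirl_unitaryRep_conj (W : G →* unitaryGroup n ℂ) (h : G) (X : Matrix n n ℂ) :
    twirl W ((W h : Matrix n n ℂ) * X * (W h : Matrix n n ℂ)ᴴ) = twirl W X := by
  simp only [twirl_apply]
  congr 1
  refine Fintype.sum_equiv (Equiv.mulRight h) _ _ fun g => ?_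
  simp only [Equiv.coe_mulRight, map_mul, UnitaryGroup.mul_val, conjTranspose_mul, mul_assoc]

lemma twirl_conj_of_commute (W : G →* unitaryGroup n ℂ) {R : Matrix n n ℂ}
    (hR : ∀ g, Commute (W g : Matrix n n ℂ) R) (X : Matrix n n ℂ) :
    twirl W (R * X * Rᴴ) = R * twirl W X * Rᴴ := by
  simp only [twirl_apply, Matrix.mul_smul, Matrix.smul_mul, mul_sum, sum_mul]
  congr 1
  refine sum_congr rfl fun g _ => ?_
  have hRstar : (W g : Matrix n n ℂ)ᴴ * Rᴴ = Rᴴ * (W g : Matrix n n ℂ)ᴴ := (hR g).star_star.eq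
  simp only [← mul_assoc, (hR g).eq]
  simp only [mul_assoc, hRstar]

lemma twirl_twirl_mulRep (A R : G →* unitaryGroup n ℂ)
    (hAR : ∀ g h, Commute (A g : Matrix n n ℂ) (R h)) (X : Matrix n n ℂ) :
    twirl A (twirl (mulRep A R hAR) X) = twirl R (twirl A X) := by
  rw [twirl_apply (mulRep A R hAR), map_smul, map_sum, twirl_apply R]
  congr 1
  refine sum_congr rfl fun h _ => ?_
  have hsplit : (mulRep A R hAR h : Matrix n n ℂ) * X * (mulRep A R hAR h : Matrix n n ℂ)ᴴ =
      R h * (A h * X * (A h : Matrix n n ℂ)ᴴ) * (R h : Matrix n n ℂ)ᴴ := by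
    simp only [coe_mulRep, conjTranspose_mul, (hAR h h).eq, mul_assoc]
  rw [hsplit, twirl_conj_of_commute A (fun g => hAR g h), twirl_unitaryRep_conj]

end UnitaryRep

section Cost

variable {G : Type} [Group G] [Fintype G] {n : Type} [Fintype n] [DecidableEq n]

def costOperator (W : G →* unitaryGroup n ℂ) (c : G → G → ℝ) (ρ : Matrix n n ℂ) :
    Matrix n n ℂ :=
  ∑ k, (c 1 k : ℂ) • ((W k : Matrix n n ℂ) * ρ * (W k : Matrix n n ℂ)ᴴ)

omit [Fintype G] in
lemma trace_unitaryRep_conj_mul_conj (W : G →* unitaryGroup n ℂ) (a b : G) (X ρ : Matrix n n ℂ) :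
    trace (((W a : Matrix n n ℂ) * X * (W a : Matrix n n ℂ)ᴴ) *
        ((W b : Matrix n n ℂ) * ρ * (W b : Matrix n n ℂ)ᴴ)) =
      trace (X * ((W (a⁻¹ * b) : Matrix n n ℂ) * ρ * (W (a⁻¹ * b) : Matrix n n ℂ)ᴴ)) := by
  rw [map_mul, UnitaryGroup.mul_val, ← conjTranspose_unitaryRep, conjTranspose_mul,
    conjTranspose_conjTranspose]
  simp only [mul_assoc]
  rw [trace_mul_comm]
  simp only [mul_assoc]

lemma aCost_covariant (W : G →* unitaryGroup n ℂ) {c : G → G → ℝ}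
    (hc : ∀ h ghat g, c (h * ghat) (h * g) = c ghat g) (ρ X : Matrix n n ℂ) :
    aCost (fun g => (W g : Matrix n n ℂ)) c ρ
        (fun ghat => (Fintype.card G : ℂ)⁻¹ •
          ((W ghat : Matrix n n ℂ) * X * (W ghat : Matrix n n ℂ)ᴴ)) =
      (Fintype.card G : ℝ)⁻¹ * (trace (X * costOperator W c ρ)).re := by
  set f : G → ℝ := fun k =>
    c 1 k * (trace (X * ((W k : Matrix n n ℂ) * ρ * (W k : Matrix n n ℂ)ᴴ))).re
  have hterm : ∀ ghat g, c ghat g * (trace (((Fintype.card G : ℂ)⁻¹ •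
      ((W ghat : Matrix n n ℂ) * X * (W ghat : Matrix n n ℂ)ᴴ)) *
        ((W g : Matrix n n ℂ) * ρ * (W g : Matrix n n ℂ)ᴴ))).re =
      (Fintype.card G : ℝ)⁻¹ * f (ghat⁻¹ * g) := by
    intro ghat g
    have hcg : c ghat g = c 1 (ghat⁻¹ * g) := by simpa using (hc ghat⁻¹ ghat g).symm
    rw [Matrix.smul_mul, trace_smul, trace_unitaryRep_conj_mul_conj, hcg, smul_eq_mul,
      ← Complex.ofReal_natCast, ← Complex.ofReal_inv, Complex.re_ofReal_mul]
    ring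
  have hshift : ∀ ghat : G, ∑ g, f (ghat⁻¹ * g) = ∑ k, f k :=
    fun ghat => Equiv.sum_comp (Equiv.mulLeft ghat⁻¹) f
  have hf : ∑ k, f k = (trace (X * costOperator W c ρ)).re := by
    simp only [f, costOperator, mul_sum, Matrix.mul_smul, trace_sum, trace_smul, Complex.re_sum,
      smul_eq_mul, Complex.re_ofReal_mul]
  simp only [aCost, pCost, hterm]
  rw [sum_comm]
  simp only [← mul_sum, hshift, sum_const, card_univ, nsmul_eq_mul, hf]
  field_simp

lemma conj_costOperator (W V : G →* unitaryGroup n ℂ)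
    (hVW : ∀ g k, (V g : Matrix n n ℂ) * W k * (V g : Matrix n n ℂ)ᴴ = W (g * k * g⁻¹))
    {c : G → G → ℝ} (hc : ∀ g ghat k, c (g * ghat * g⁻¹) (g * k * g⁻¹) = c ghat k)
    {ρ : Matrix n n ℂ} (hρ : ∀ g, (V g : Matrix n n ℂ) * ρ * (V g : Matrix n n ℂ)ᴴ = ρ) (g : G) :
    (V g : Matrix n n ℂ) * costOperator W c ρ * (V g : Matrix n n ℂ)ᴴ = costOperator W c ρ := by
  simp only [costOperator, mul_sum, sum_mul, Matrix.mul_smul, Matrix.smul_mul]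
  refine Fintype.sum_equiv (MulAut.conj g) _ _ fun k => ?_
  have hVWstar : (V g : Matrix n n ℂ) * (W k : Matrix n n ℂ)ᴴ * (V g : Matrix n n ℂ)ᴴ =
      (W (g * k * g⁻¹) : Matrix n n ℂ)ᴴ := by
    rw [← hVW]
    simp only [conjTranspose_mul, conjTranspose_conjTranspose, mul_assoc]
  have hck : c 1 k = c 1 (g * k * g⁻¹) := by simpa using (hc g 1 k).symm
  rw [unitary_conj_mul_mul (conjTranspose_mul_unitaryRep V g), hρ, hVW, hVWstar, hck]
  rfl

lemma trace_twirl_mul_of_conj_eq (V : G →* unitaryGroup n ℂ) {Θ : Matrix n n ℂ}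
    (hΘ : ∀ g, (V g : Matrix n n ℂ) * Θ * (V g : Matrix n n ℂ)ᴴ = Θ) (X : Matrix n n ℂ) :
    trace (twirl V X * Θ) = trace (X * Θ) := by
  have hterm : ∀ g, trace ((V g : Matrix n n ℂ) * X * (V g : Matrix n n ℂ)ᴴ * Θ) =
      trace (X * Θ) := by
    intro g
    have hΘ' := hΘ g⁻¹
    rw [← conjTranspose_unitaryRep, conjTranspose_conjTranspose] at hΘ'
    calc trace ((V g : Matrix n n ℂ) * X * (V g : Matrix n n ℂ)ᴴ * Θ)
        = trace (X * ((V g : Matrix n n ℂ)ᴴ * Θ * (V g : Matrix n n ℂ))) := by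
          simp only [mul_assoc]
          rw [trace_mul_comm]
          simp only [mul_assoc]
      _ = trace (X * Θ) := by rw [hΘ']
  rw [twirl_apply, Matrix.smul_mul, sum_mul, trace_smul, trace_sum]
  simp only [hterm, sum_const, card_univ, nsmul_eq_mul, smul_eq_mul]
  field_simp

end Cost

theorem stmt12_general {G : Type} [Group G] [Fintype G]
    {ι : Type} [Fintype ι] [DecidableEq ι] (d : ι → ℕ)
    (U : ∀ μ, G →* Matrix.unitaryGroup (Fin (d μ)) ℂ)
    (c : G → G → ℝ) (hc : ∀ h k ghat g : G, c (h * ghat * k) (h * g * k) = c ghat g)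
    (ρ : Matrix (Σ μ, Fin (d μ) × Fin (d μ)) (Σ μ, Fin (d μ) × Fin (d μ)) ℂ)
    (hρiso : ∀ g : G, (Utilde d U g * UtildeR d U g) * ρ * (Utilde d U g * UtildeR d U g)ᴴ = ρ)
    (ξ : Matrix (Σ μ, Fin (d μ) × Fin (d μ)) (Σ μ, Fin (d μ) × Fin (d μ)) ℂ)
    (hξ : ξ.PosSemidef)
    (hnorm : (Fintype.card G : ℂ)⁻¹ •
      ∑ ghat : G, Utilde d U ghat * ξ * (Utilde d U ghat)ᴴ = 1)
    (ξ' : Matrix (Σ μ, Fin (d μ) × Fin (d μ)) (Σ μ, Fin (d μ) × Fin (d μ)) ℂ)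
    (hξ' : ξ' = (Fintype.card G : ℂ)⁻¹ •
      ∑ h : G, (Utilde d U h * UtildeR d U h) * ξ * (Utilde d U h * UtildeR d U h)ᴴ) :
    ξ'.PosSemidef ∧
    (∀ g : G, (Utilde d U g * UtildeR d U g) * ξ' * (Utilde d U g * UtildeR d U g)ᴴ = ξ') ∧
    (∀ ghat : G, ((Fintype.card G : ℂ)⁻¹ •
        (Utilde d U ghat * ξ' * (Utilde d U ghat)ᴴ)).PosSemidef) ∧
    ((Fintype.card G : ℂ)⁻¹ • ∑ ghat : G, Utilde d U ghat * ξ' * (Utilde d U ghat)ᴴ = 1) ∧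
    (aCost (Utilde d U) c ρ
        (fun ghat => (Fintype.card G : ℂ)⁻¹ • (Utilde d U ghat * ξ' * (Utilde d U ghat)ᴴ))
      = aCost (Utilde d U) c ρ
        (fun ghat => (Fintype.card G : ℂ)⁻¹ • (Utilde d U ghat * ξ * (Utilde d U ghat)ᴴ))) := by
  let A := utildeRep d U
  let V := mulRep A (utildeRRep d U) (Utilde_commute_UtildeR d U)
  have hξ'V : ξ' = twirl V ξ := hξ'
  have hnormA : twirl A ξ = 1 := hnorm
  have hcL : ∀ h ghat g, c (h * ghat) (h * g) = c ghat g := fun h ghat g => by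
    simpa using hc h 1 ghat g
  have hΘ : ∀ g, (V g : Matrix _ _ ℂ) * costOperator A c ρ * (V g : Matrix _ _ ℂ)ᴴ =
      costOperator A c ρ :=
    conj_costOperator A V (mulRep_conj_left _ _ _) (fun g => hc g g⁻¹) hρiso
  subst hξ'V
  refine ⟨hξ.twirl V, fun g => unitaryRep_conj_twirl V g ξ, fun ghat =>
    ((hξ.twirl V).mul_mul_conjTranspose_same _).smul (by positivity), ?_, ?_⟩
  · exact (twirl_twirl_mulRep A _ _ ξ).trans (by rw [hnormA, twirl_one])
  · calc _ = (Fintype.card G : ℝ)⁻¹ * (trace (twirl V ξ * costOperator A c ρ)).re :=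
          aCost_covariant A hcL ρ _
      _ = (Fintype.card G : ℝ)⁻¹ * (trace (ξ * costOperator A c ρ)).re := by
          rw [trace_twirl_mul_of_conj_eq V hΘ]
      _ = _ := (aCost_covariant A hcL ρ ξ).symm

/-- For an invariant cost function and an isotropic input state, symmetrizing the seed of a
covariant POVM gives an isotropic positive semidefinite seed `ξ'` whose covariant POVM `P'`
has the same average cost as the original one. -/
theorem stmt12 {G : Type} [Group G] [Fintype G] [DecidableEq G]
    {ι : Type} [Fintype ι] [DecidableEq ι] (d : ι → ℕ) (hd : ∀ μ, 0 < d μ)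
    (U : ∀ μ, G →* Matrix.unitaryGroup (Fin (d μ)) ℂ)
    (hirr : ∀ μ, IsIrrep (U μ))
    (hineq : Pairwise fun μ ν => ¬ RepEquiv (U μ) (U ν))
    (c : G → G → ℝ) (hc : ∀ h k ghat g : G, c (h * ghat * k) (h * g * k) = c ghat g)
    (ρ : Matrix (Σ μ, Fin (d μ) × Fin (d μ)) (Σ μ, Fin (d μ) × Fin (d μ)) ℂ)
    (hρ : ρ.PosSemidef) (hρtr : ρ.trace = 1)
    (hρiso : ∀ g : G, (Utilde d U g * UtildeR d U g) * ρ * (Utilde d U g * UtildeR d U g)ᴴ = ρ)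
    (ξ : Matrix (Σ μ, Fin (d μ) × Fin (d μ)) (Σ μ, Fin (d μ) × Fin (d μ)) ℂ)
    (hξ : ξ.PosSemidef)
    (hnorm : (Fintype.card G : ℂ)⁻¹ •
      ∑ ghat : G, Utilde d U ghat * ξ * (Utilde d U ghat)ᴴ = 1)
    (ξ' : Matrix (Σ μ, Fin (d μ) × Fin (d μ)) (Σ μ, Fin (d μ) × Fin (d μ)) ℂ)
    (hξ' : ξ' = (Fintype.card G : ℂ)⁻¹ •
      ∑ h : G, (Utilde d U h * UtildeR d U h) * ξ * (Utilde d U h * UtildeR d U h)ᴴ) :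
    ξ'.PosSemidef ∧
    (∀ g : G, (Utilde d U g * UtildeR d U g) * ξ' * (Utilde d U g * UtildeR d U g)ᴴ = ξ') ∧
    (∀ ghat : G, ((Fintype.card G : ℂ)⁻¹ •
        (Utilde d U ghat * ξ' * (Utilde d U ghat)ᴴ)).PosSemidef) ∧
    ((Fintype.card G : ℂ)⁻¹ • ∑ ghat : G, Utilde d U ghat * ξ' * (Utilde d U ghat)ᴴ = 1) ∧
    (aCost (Utilde d U) c ρ
        (fun ghat => (Fintype.card G : ℂ)⁻¹ • (Utilde d U ghat * ξ' * (Utilde d U ghat)ᴴ))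
      = aCost (Utilde d U) c ρ
        (fun ghat => (Fintype.card G : ℂ)⁻¹ • (Utilde d U ghat * ξ * (Utilde d U ghat)ᴴ))) :=
  stmt12_general d U c hc ρ hρiso ξ hξ hnorm ξ' hξ'
end
end

section
/- Let |Φ⟩ := ⊕_μ √(p_μ/d_μ)|I_{d_μ}⟩⟩ be a class state with all weights p_μ > 0, set Φ_g := Ũ(g)Φ, and define ρ_G := (1/|G|) Σ_{g∈G} |Φ_g⟩⟨Φ_g|. Then: (i) ρ_G = ⊕_μ (p_μ/d_μ²) I_{d_μ}⊗I_{d_μ}, so ρ_G is positive definite on H̃; (ii) ρ_G^{-1/2}|Φ_ĝ⟩ = Ũ(ĝ)|η⟩ for every ĝ ∈ G; (iii) consequently the class POVM satisfies E_ĝ = (1/|G|)·ρ_G^{-1/2}|Φ_ĝ⟩⟨Φ_ĝ|ρ_G^{-1/2}, i.e., the class POVM is the square-root measurement associated to the ensemble {(1/|G|)|Φ_g⟩⟨Φ_g|}_{g∈G}. -/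
open Matrix Kronecker ComplexOrder

noncomputable section

/-- The class vector `|η⟩ = ⊕_μ √d_μ |I_{d_μ}⟩⟩`. -/
def etaVec {ι : Type} (d : ι → ℕ) : (Σ μ, Fin (d μ) × Fin (d μ)) → ℂ :=
  fun q => (Real.sqrt (d q.1) : ℂ) * (if q.2.1 = q.2.2 then 1 else 0)

/-- The class state `|Φ⟩ = ⊕_μ √(p_μ/d_μ) |I_{d_μ}⟩⟩`. -/
def classVec {ι : Type} (d : ι → ℕ) (p : ι → ℝ) : (Σ μ, Fin (d μ) × Fin (d μ)) → ℂ :=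
  fun q => (Real.sqrt (p q.1 / d q.1) : ℂ) * (if q.2.1 = q.2.2 then 1 else 0)

/-- The orbit `|Φ_g⟩ = Ũ(g)|Φ⟩` of a class state. -/
def classOrbit {G : Type} [Group G] {ι : Type} [Fintype ι] [DecidableEq ι] (d : ι → ℕ)
    (U : ∀ μ, G →* Matrix.unitaryGroup (Fin (d μ)) ℂ) (p : ι → ℝ) (g : G) :
    (Σ μ, Fin (d μ) × Fin (d μ)) → ℂ :=
  (Utilde d U g).mulVec (classVec d p)

/-- The average state `ρ_G = |G|⁻¹ Σ_g |Φ_g⟩⟨Φ_g|` of the orbit of a class state. -/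
def rhoG {G : Type} [Group G] [Fintype G] {ι : Type} [Fintype ι] [DecidableEq ι] (d : ι → ℕ)
    (U : ∀ μ, G →* Matrix.unitaryGroup (Fin (d μ)) ℂ) (p : ι → ℝ) :
    Matrix (Σ μ, Fin (d μ) × Fin (d μ)) (Σ μ, Fin (d μ) × Fin (d μ)) ℂ :=
  (Fintype.card G : ℂ)⁻¹ •
    ∑ g : G, Matrix.vecMulVec (classOrbit d U p g) (star (classOrbit d U p g))

/-!
By Schur orthogonality, `∑_g U^μ(g)_{ij} conj U^ν(g)_{kl} = δ_{μν} δ_{ik} δ_{jl} |G| / d_μ`; since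
`|Φ_g⟩` has entries `√(p_μ/d_μ) U^μ(g)_{ij}`, this makes `ρ_G` diagonal with entries `p_μ / d_μ²`.
Positive semidefinite square roots are unique, so any `S ≥ 0` with `S² ρ_G = 1` is the diagonal
matrix with entries `d_μ / √p_μ`, which sends `|Φ_g⟩` to `Ũ(g)|η⟩` entrywise. Conjugating the
rank-one projector onto `|Φ_ĝ⟩` by the Hermitian `S` then gives the class POVM element.
-/

open Finset ComplexConjugate

lemma Matrix.blockDiagonal'_smul_one {ι α : Type*} {m : ι → Type*} [DecidableEq ι]
    [∀ μ, DecidableEq (m μ)] [CommSemiring α] (c : ι → α) :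
    blockDiagonal' (fun μ => c μ • (1 : Matrix (m μ) (m μ) α)) = diagonal fun q => c q.1 := by
  simp_rw [smul_one_eq_diagonal, blockDiagonal'_diagonal]

lemma Matrix.PosSemidef.eq_diagonal_inv_sqrt {N : Type*} [Fintype N] [DecidableEq N]
    {S : Matrix N N ℂ} (hS : S.PosSemidef) {r : N → ℝ} (hr : ∀ q, 0 < r q)
    (h : S * S * diagonal (fun q => (r q : ℂ)) = 1) :
    S = diagonal fun q => (((√(r q))⁻¹ : ℝ) : ℂ) := by
  have hSS : S * S = diagonal fun q => ((r q)⁻¹ : ℂ) := by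
    have hr' : diagonal (fun q => (r q : ℂ)) * diagonal (fun q => ((r q)⁻¹ : ℂ)) = 1 := by
      rw [diagonal_mul_diagonal, ← diagonal_one]
      exact congrArg diagonal (funext fun q => mul_inv_cancel₀ (by exact_mod_cast (hr q).ne'))
    rw [← Matrix.mul_one (S * S), ← hr', ← Matrix.mul_assoc, h, Matrix.one_mul]
  set D : Matrix N N ℂ := diagonal fun q => (((√(r q))⁻¹ : ℝ) : ℂ) with hD
  have hDD : D * D = diagonal fun q => ((r q)⁻¹ : ℂ) := by
    rw [hD, diagonal_mul_diagonal]
    refine congrArg diagonal (funext fun q => ?_)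
    rw [← Complex.ofReal_mul, ← mul_inv, Real.mul_self_sqrt (hr q).le, Complex.ofReal_inv]
  have hDpos : D.PosSemidef := posSemidef_diagonal_iff.mpr fun q => by positivity
  open MatrixOrder in
  rw [← CFC.sqrt_mul_self S hS.nonneg, ← CFC.sqrt_mul_self D hDpos.nonneg, hSS, hDD]

lemma Matrix.mul_vecMulVec_star_mul_conjTranspose_s17 {N : Type*} [Fintype N] (A : Matrix N N ℂ)
    (x : N → ℂ) : A * vecMulVec x (star x) * Aᴴ = vecMulVec (A *ᵥ x) (star (A *ᵥ x)) := by
  rw [mul_vecMulVec, vecMulVec_mul, star_mulVec]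

lemma Real.inv_sqrt_div_sq_mul_sqrt_div {p d : ℝ} (hp : 0 < p) (hd : 0 ≤ d) :
    (√(p / d ^ 2))⁻¹ * √(p / d) = √d := by
  rw [Real.sqrt_div' _ (sq_nonneg d), Real.sqrt_sq hd, Real.sqrt_div' _ hd, inv_div,
    div_mul_div_cancel₀ (Real.sqrt_pos.mpr hp).ne', Real.div_sqrt]

section Schur

variable {G : Type} [Group G]

lemma sum_conj_intertwines [Fintype G] {n m : ℕ} (V : G →* Matrix.unitaryGroup (Fin n) ℂ)
    (W : G →* Matrix.unitaryGroup (Fin m) ℂ) (E : Matrix (Fin n) (Fin m) ℂ) (h : G) :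
    (∑ g, (V g).1 * E * star (W g).1) * (W h).1 = (V h).1 * ∑ g, (V g).1 * E * star (W g).1 := by
  rw [Matrix.sum_mul, Matrix.mul_sum]
  refine (Fintype.sum_equiv (Equiv.mulLeft h) _ _ fun g => ?_).symm
  have hWh : star (W h).1 * (W h).1 = 1 := (W h).2.1
  simp only [Equiv.coe_mulLeft, map_mul, Submonoid.coe_mul, star_mul, Matrix.mul_assoc,
    hWh, Matrix.mul_one]

lemma conjTranspose_intertwines {n m : ℕ} (V : G →* Matrix.unitaryGroup (Fin n) ℂ)
    (W : G →* Matrix.unitaryGroup (Fin m) ℂ) {T : Matrix (Fin n) (Fin m) ℂ}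
    (hT : ∀ h, T * (W h).1 = (V h).1 * T) (h : G) : Tᴴ * (V h).1 = (W h).1 * Tᴴ := by
  simpa [map_inv, Matrix.star_eq_conjTranspose] using (congrArg conjTranspose (hT h⁻¹)).symm

/-- `TᴴT` and `TTᴴ` are scalars by irreducibility, and nonzero unless `T = 0`; so a nonzero `T`
is invertible up to scalars. -/
lemma intertwiner_eq_zero_of_not_repEquiv {n m : ℕ} {V : G →* Matrix.unitaryGroup (Fin n) ℂ}
    {W : G →* Matrix.unitaryGroup (Fin m) ℂ} (hV : IsIrrep V) (hW : IsIrrep W)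
    (hne : ¬ RepEquiv W V) {T : Matrix (Fin n) (Fin m) ℂ}
    (hT : ∀ h, T * (W h).1 = (V h).1 * T) : T = 0 := by
  by_contra hT0
  have hT' := conjTranspose_intertwines V W hT
  obtain ⟨c, hc⟩ := hW (Tᴴ * T) fun h => by
    rw [Matrix.mul_assoc, hT h, ← Matrix.mul_assoc, hT' h, Matrix.mul_assoc]
  obtain ⟨c', hc'⟩ := hV (T * Tᴴ) fun h => by
    rw [Matrix.mul_assoc, hT' h, ← Matrix.mul_assoc, hT h, Matrix.mul_assoc]
  have hc0 : c ≠ 0 := by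
    rintro rfl
    exact hT0 (conjTranspose_mul_self_eq_zero.mp (by rwa [zero_smul] at hc))
  have hc'0 : c' ≠ 0 := by
    rintro rfl
    exact hT0 (self_mul_conjTranspose_eq_zero.mp (by rwa [zero_smul] at hc'))
  have hleft : (c⁻¹ • Tᴴ) * T = 1 := by
    rw [Matrix.smul_mul, hc, smul_smul, inv_mul_cancel₀ hc0, one_smul]
  have hright : T * (c'⁻¹ • Tᴴ) = 1 := by
    rw [Matrix.mul_smul, hc', smul_smul, inv_mul_cancel₀ hc'0, one_smul]
  refine hne ⟨T, ⟨fun x y hxy => ?_, mulVec_surjective_iff_exists_right_inverse.mpr ⟨_, hright⟩⟩,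
    hT⟩
  simpa [mulVec_mulVec, hleft] using congrArg (c⁻¹ • Tᴴ).mulVec hxy

variable [Fintype G]

lemma sum_conj_eq_zero_of_not_repEquiv {n m : ℕ} {V : G →* Matrix.unitaryGroup (Fin n) ℂ}
    {W : G →* Matrix.unitaryGroup (Fin m) ℂ} (hV : IsIrrep V) (hW : IsIrrep W)
    (hne : ¬ RepEquiv W V) (E : Matrix (Fin n) (Fin m) ℂ) :
    ∑ g, (V g).1 * E * star (W g).1 = 0 :=
  intertwiner_eq_zero_of_not_repEquiv hV hW hne (sum_conj_intertwines V W E)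

lemma sum_conj_self_eq_trace_smul_one {n : ℕ} {V : G →* Matrix.unitaryGroup (Fin n) ℂ}
    (hV : IsIrrep V) (E : Matrix (Fin n) (Fin n) ℂ) :
    ∑ g, (V g).1 * E * star (V g).1 = (Fintype.card G * E.trace / n) • (1 : Matrix _ _ ℂ) := by
  obtain ⟨c, hc⟩ := hV _ (sum_conj_intertwines V V E)
  have htrace : (∑ g, (V g).1 * E * star (V g).1).trace = Fintype.card G * E.trace := by
    simp [Matrix.trace_sum, Matrix.trace_mul_cycle _ E, (V _).2.1]
  rcases Nat.eq_zero_or_pos n with rfl | hn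
  · exact Subsingleton.elim _ _
  rw [hc, Matrix.trace_smul, Matrix.trace_one, Fintype.card_fin, smul_eq_mul] at htrace
  rw [hc, ← htrace]
  field_simp

lemma sum_apply_mul_conj_apply_eq_sum_single {n m : ℕ} (V : G →* Matrix.unitaryGroup (Fin n) ℂ)
    (W : G →* Matrix.unitaryGroup (Fin m) ℂ) (i j : Fin n) (k l : Fin m) :
    ∑ g, (V g).1 i j * conj ((W g).1 k l)
      = (∑ g, (V g).1 * Matrix.single j l (1 : ℂ) * star (W g).1) i k := by
  simp [Matrix.sum_apply, Matrix.mul_apply, Matrix.single_apply, ite_and]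

lemma sum_apply_mul_conj_apply_eq_zero_of_not_repEquiv {n m : ℕ}
    {V : G →* Matrix.unitaryGroup (Fin n) ℂ} {W : G →* Matrix.unitaryGroup (Fin m) ℂ}
    (hV : IsIrrep V) (hW : IsIrrep W) (hne : ¬ RepEquiv W V) (i j : Fin n) (k l : Fin m) :
    ∑ g, (V g).1 i j * conj ((W g).1 k l) = 0 := by
  rw [sum_apply_mul_conj_apply_eq_sum_single, sum_conj_eq_zero_of_not_repEquiv hV hW hne, Matrix.zero_apply]

lemma sum_apply_mul_conj_apply_self {n : ℕ} {V : G →* Matrix.unitaryGroup (Fin n) ℂ}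
    (hV : IsIrrep V) (i j k l : Fin n) :
    ∑ g, (V g).1 i j * conj ((V g).1 k l)
      = if i = k ∧ j = l then (Fintype.card G / n : ℂ) else 0 := by
  rw [sum_apply_mul_conj_apply_eq_sum_single, sum_conj_self_eq_trace_smul_one hV]
  by_cases hjl : j = l
  · subst hjl
    simp [Matrix.trace_single_eq_same, Matrix.one_apply]
  · simp [Matrix.trace_single_eq_of_ne _ _ _ hjl, hjl]

end Schur

section ClassStates

variable {G : Type} [Group G] {ι : Type} [Fintype ι] [DecidableEq ι] (d : ι → ℕ)
  (U : ∀ μ, G →* Matrix.unitaryGroup (Fin (d μ)) ℂ)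

lemma Utilde_mulVec_apply (g : G) (c : ι → ℂ) (μ : ι) (i j : Fin (d μ)) :
    (Utilde d U g *ᵥ fun q => c q.1 * if q.2.1 = q.2.2 then 1 else 0) ⟨μ, i, j⟩
      = c μ * (U μ g).1 i j := by
  rw [mul_comm]
  simp [Utilde, mulVec, dotProduct, Fintype.sum_sigma, Fintype.sum_prod_type,
    blockDiagonal'_apply, kroneckerMap_apply, one_apply]

lemma classOrbit_apply (p : ι → ℝ) (g : G) (μ : ι) (i j : Fin (d μ)) :
    classOrbit d U p g ⟨μ, i, j⟩ = (√(p μ / d μ) : ℂ) * (U μ g).1 i j :=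
  Utilde_mulVec_apply d U g (fun μ => (√(p μ / d μ) : ℂ)) μ i j

lemma Utilde_mulVec_etaVec_apply (g : G) (μ : ι) (i j : Fin (d μ)) :
    (Utilde d U g *ᵥ etaVec d) ⟨μ, i, j⟩ = (√(d μ : ℝ) : ℂ) * (U μ g).1 i j :=
  Utilde_mulVec_apply d U g (fun μ => (√(d μ : ℝ) : ℂ)) μ i j

variable {d U} [Fintype G]

lemma rhoG_eq_blockDiagonal (hirr : ∀ μ, IsIrrep (U μ))
    (hineq : Pairwise fun μ ν => ¬ RepEquiv (U μ) (U ν)) {p : ι → ℝ} (hp : ∀ μ, 0 ≤ p μ) :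
    rhoG d U p = blockDiagonal' fun μ => ((p μ / (d μ : ℝ) ^ 2 : ℝ) : ℂ) •
      (1 : Matrix (Fin (d μ) × Fin (d μ)) (Fin (d μ) × Fin (d μ)) ℂ) := by
  ext ⟨μ, i, j⟩ ⟨ν, k, l⟩
  simp only [rhoG, Matrix.smul_apply, Matrix.sum_apply, vecMulVec_apply, Pi.star_apply,
    classOrbit_apply, star_mul', Complex.star_def, Complex.conj_ofReal, smul_eq_mul]
  simp only [mul_mul_mul_comm _ ((U μ _).1 i j), ← Finset.mul_sum]
  rcases eq_or_ne μ ν with rfl | hμν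
  · rw [blockDiagonal'_apply_eq, sum_apply_mul_conj_apply_self (hirr μ), ← Complex.ofReal_mul, Real.mul_self_sqrt (div_nonneg (hp μ) (Nat.cast_nonneg _)),
      Matrix.smul_apply, one_apply]
    simp only [Prod.mk.injEq]
    have hG : (Fintype.card G : ℂ) ≠ 0 := Nat.cast_ne_zero.mpr Fintype.card_ne_zero
    have hd : (d μ : ℂ) ≠ 0 := Nat.cast_ne_zero.mpr i.pos.ne'
    split_ifs
    · push_cast
      rw [smul_eq_mul]
      field_simp
    · simp
  · rw [blockDiagonal'_apply_ne _ _ _ hμν,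
      sum_apply_mul_conj_apply_eq_zero_of_not_repEquiv (hirr μ) (hirr ν) (hineq hμν.symm)]
    simp

end ClassStates

theorem stmt17_general {G : Type} [Group G] [Fintype G]
    {ι : Type} [Fintype ι] [DecidableEq ι] (d : ι → ℕ)
    (U : ∀ μ, G →* Matrix.unitaryGroup (Fin (d μ)) ℂ)
    (hirr : ∀ μ, IsIrrep (U μ))
    (hineq : Pairwise fun μ ν => ¬ RepEquiv (U μ) (U ν))
    (p : ι → ℝ) (hp : ∀ μ, 0 < p μ) :
    (rhoG d U p = Matrix.blockDiagonal' (fun μ => ((p μ / (d μ : ℝ) ^ 2 : ℝ) : ℂ) •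
        (1 : Matrix (Fin (d μ) × Fin (d μ)) (Fin (d μ) × Fin (d μ)) ℂ)) ∧
      (rhoG d U p).PosDef) ∧
    (∀ S : Matrix (Σ μ, Fin (d μ) × Fin (d μ)) (Σ μ, Fin (d μ) × Fin (d μ)) ℂ,
      S.PosSemidef → S * S * rhoG d U p = 1 →
      (∀ ghat : G, S.mulVec (classOrbit d U p ghat) = (Utilde d U ghat).mulVec (etaVec d)) ∧
      (∀ ghat : G,
        (Fintype.card G : ℂ)⁻¹ • (Utilde d U ghat
            * Matrix.vecMulVec (etaVec d) (star (etaVec d)) * (Utilde d U ghat)ᴴ)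
          = (Fintype.card G : ℂ)⁻¹ • (S
              * Matrix.vecMulVec (classOrbit d U p ghat) (star (classOrbit d U p ghat))
              * S))) := by
  have hrho := rhoG_eq_blockDiagonal hirr hineq fun μ => (hp μ).le
  have hdiag : rhoG d U p = diagonal fun q => ((p q.1 / (d q.1 : ℝ) ^ 2 : ℝ) : ℂ) := by
    rw [hrho, blockDiagonal'_smul_one]
  have hpos : ∀ q : Σ μ, Fin (d μ) × Fin (d μ), 0 < p q.1 / (d q.1 : ℝ) ^ 2 :=
    fun ⟨μ, i, _⟩ => div_pos (hp μ) (pow_pos (Nat.cast_pos.mpr i.pos) 2)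
  refine ⟨⟨hrho, hdiag ▸ posDef_diagonal_iff.mpr fun q => by exact_mod_cast hpos q⟩,
    fun S hS hSρ => ?_⟩
  have hSdiag := hS.eq_diagonal_inv_sqrt hpos (hdiag ▸ hSρ)
  have hSΦ : ∀ ghat, S *ᵥ classOrbit d U p ghat = Utilde d U ghat *ᵥ etaVec d := by
    intro ghat
    ext ⟨μ, i, j⟩
    rw [hSdiag, mulVec_diagonal, classOrbit_apply, Utilde_mulVec_etaVec_apply, ← mul_assoc,
      ← Complex.ofReal_mul, Real.inv_sqrt_div_sq_mul_sqrt_div (hp μ) (Nat.cast_nonneg _)]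
  refine ⟨hSΦ, fun ghat => ?_⟩
  rw [mul_vecMulVec_star_mul_conjTranspose_s17, ← hSΦ, ← mul_vecMulVec_star_mul_conjTranspose_s17,
    hS.isHermitian.eq]

/-- The class POVM is the square-root measurement of the orbit of a class state:
(i) `ρ_G = ⊕_μ (p_μ/d_μ²) I ⊗ I` is positive definite; (ii) for the (unique) positive
semidefinite `S` with `S² = ρ_G⁻¹` (i.e. `S = ρ_G^{-1/2}`) one has `S|Φ_ĝ⟩ = Ũ(ĝ)|η⟩`;
(iii) hence `E_ĝ = |G|⁻¹ S|Φ_ĝ⟩⟨Φ_ĝ|S`. -/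
theorem stmt17 {G : Type} [Group G] [Fintype G] [DecidableEq G]
    {ι : Type} [Fintype ι] [DecidableEq ι] (d : ι → ℕ) (hd : ∀ μ, 0 < d μ)
    (U : ∀ μ, G →* Matrix.unitaryGroup (Fin (d μ)) ℂ)
    (hirr : ∀ μ, IsIrrep (U μ))
    (hineq : Pairwise fun μ ν => ¬ RepEquiv (U μ) (U ν))
    (p : ι → ℝ) (hp : ∀ μ, 0 < p μ) (hp1 : ∑ μ, p μ = 1) :
    (rhoG d U p = Matrix.blockDiagonal' (fun μ => ((p μ / (d μ : ℝ) ^ 2 : ℝ) : ℂ) •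
        (1 : Matrix (Fin (d μ) × Fin (d μ)) (Fin (d μ) × Fin (d μ)) ℂ)) ∧
      (rhoG d U p).PosDef) ∧
    (∀ S : Matrix (Σ μ, Fin (d μ) × Fin (d μ)) (Σ μ, Fin (d μ) × Fin (d μ)) ℂ,
      S.PosSemidef → S * S * rhoG d U p = 1 →
      (∀ ghat : G, S.mulVec (classOrbit d U p ghat) = (Utilde d U ghat).mulVec (etaVec d)) ∧
      (∀ ghat : G,
        (Fintype.card G : ℂ)⁻¹ • (Utilde d U ghat
            * Matrix.vecMulVec (etaVec d) (star (etaVec d)) * (Utilde d U ghat)ᴴ)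
          = (Fintype.card G : ℂ)⁻¹ • (S
              * Matrix.vecMulVec (classOrbit d U p ghat) (star (classOrbit d U p ghat))
              * S))) :=
  stmt17_general d U hirr hineq p hp
end
end
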